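/- arXiv:math/0112187 — 3 statements merged into one kernel-verified Lean document; each statement's English description precedes it below -/
import Mathlib

section
/- Let Γ be a finite connected graph with Euler characteristic 1 - n (so first Betti number n), with a basepoint *, in which every non-basepoint vertex has valence at most 3, and define the degree of Γ as the sum over non-basepoint vertices v of (valence(v) - 2). If deg(Γ) < n/2, then Γ has a loop edge at the basepoint (i.e., an edge with both endpoints equal to *). -/
/-- Let `Γ` be a finite connected pointed multigraph with basepoint
`base`, Euler characteristic `1 - n` (first Betti number `n`, i.e.
`#edges - #vertices + 1 = n`), in which every non-basepoint vertex has valence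
at most `3` (as in Hatcher–Vogtmann one reduces to the case where each
non-basepoint vertex is trivalent, which we assume; valence counts edge-ends,
loops twice).  Define the degree of `Γ` as `Σ_{v ≠ base} (valence v - 2)`.
If `deg Γ < n/2`, then `Γ` has a loop edge at the basepoint, i.e. an edge both
of whose endpoints are `base`.  (Lemma 5.2(1) of Hatcher–Vogtmann, for
ordinary pointed graphs.) -/
theorem loop_at_basepoint_of_small_degree
    (V Et : Type*) [Fintype V] [DecidableEq V] [Fintype Et]
    (ends : Et → Multiset V) (hends : ∀ e, Multiset.card (ends e) = 2)
    (base : V)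
    (hconn : ∀ u v : V, Relation.ReflTransGen
      (fun a b => ∃ e, a ∈ ends e ∧ b ∈ ends e) u v)
    (n : ℕ)
    (hn : Fintype.card Et + 1 = Fintype.card V + n)
    (hval : ∀ v : V, v ≠ base → (∑ e : Et, (ends e).count v) = 3)
    (deg : ℤ)
    (hdeg : deg = ∑ v ∈ Finset.univ.filter (fun v : V => v ≠ base),
      ((∑ e : Et, (ends e).count v : ℤ) - 2))
    (hsmall : 2 * deg < (n : ℤ)) :
    ∃ e : Et, (ends e).count base = 2 := by
  by_contra h
  push_neg at h
  set S := Finset.univ.filter (fun v : V => v ≠ base) with hS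
  have hbase_not : base ∉ S := by simp [hS]
  have huniv : (Finset.univ : Finset V) = insert base S := by
    ext v
    simp [hS]
    tauto
  -- total count over all vertices of each edge is 2
  have hsum2 : ∀ e, ∑ v : V, (ends e).count v = 2 := by
    intro e
    rw [← hends e]
    rw [← Multiset.toFinset_sum_count_eq (ends e)]
    exact (Finset.sum_subset (Finset.subset_univ _)
      (fun x _ hx => Multiset.count_eq_zero_of_notMem (by simpa using hx))).symm
  -- split the sum over univ
  have hsplit : ∀ e, (ends e).count base + ∑ v ∈ S, (ends e).count v = 2 := by
    intro e
    rw [← hsum2 e, huniv, Finset.sum_insert hbase_not]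
  -- no loop at base: count base ≤ 1 per edge
  have hle1 : ∀ e, (ends e).count base ≤ 1 := by
    intro e
    have h2 := hsplit e
    have := h e
    omega
  -- key inequality: count base ≤ sum over S per edge
  have hkey : (∑ e : Et, (ends e).count base) ≤ ∑ e : Et, ∑ v ∈ S, (ends e).count v := by
    apply Finset.sum_le_sum
    intro e _
    have := hsplit e
    have := hle1 e
    omega
  -- total edge-end count
  have htot : (∑ e : Et, (ends e).count base) + ∑ e : Et, ∑ v ∈ S, (ends e).count v
      = 2 * Fintype.card Et := by
    rw [← Finset.sum_add_distrib]
    rw [Finset.sum_congr rfl (fun e _ => hsplit e)]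
    simp [Finset.card_univ, mul_comm]
  -- the S-part equals 3 * |S|
  have hSpart : (∑ e : Et, ∑ v ∈ S, (ends e).count v) = 3 * S.card := by
    rw [Finset.sum_comm]
    rw [Finset.sum_congr rfl (fun v hv => hval v (by simpa [hS] using hv))]
    simp [mul_comm]
  -- |S| + 1 = card V
  have hScard : S.card + 1 = Fintype.card V := by
    have hc : (Finset.univ : Finset V).card = S.card + 1 := by
      rw [huniv, Finset.card_insert_of_notMem hbase_not]
    rw [Finset.card_univ] at hc
    omega
  -- deg = |S|
  have hdeg' : deg = (S.card : ℤ) := by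
    rw [hdeg]
    have h1 : ∀ v ∈ S, ((∑ e : Et, ((ends e).count v : ℤ)) - 2) = 1 := by
      intro v hv
      have hv3 := hval v (by simpa [hS] using hv)
      rw [← Nat.cast_sum, hv3]
      norm_num
    rw [Finset.sum_congr rfl h1]
    simp
  omega
end

section
/- Let Γ be a finite connected pointed graph of first Betti number n whose degree (sum over non-basepoint vertices of valence minus 2) satisfies deg(Γ) < n - 1. Then the complement Γ \ {*} of the basepoint is disconnected or empty. -/
/-!
If `Γ \ {*}` were nonempty and connected, so would be its incidence graph, whose vertices are
the non-basepoint vertices and the edges of `Γ`, a vertex being adjacent to the edges at it.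
A connected graph has at least one edge fewer than it has vertices, so there are at least
`#V' + #E - 1` incidences, where `V'` is the set of non-basepoint vertices. On the other hand
every `v ∈ V'` lies on at most `|v|` of them, which gives at most `deg Γ + 2 #V'` incidences.
Since `#V' = #V - 1`, this says `#E ≤ deg Γ + #V`, that is `n ≤ deg Γ + 1`.
-/

open Finset

namespace SimpleGraph

variable {α β : Type*}

def incidenceGraph (r : α → β → Prop) : SimpleGraph (α ⊕ β) where
  Adj p q :=
    (∃ a b, p = .inl a ∧ q = .inr b ∧ r a b) ∨ (∃ a b, p = .inr b ∧ q = .inl a ∧ r a b)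
  symm := ⟨by
    rintro p q (⟨a, b, rfl, rfl, h⟩ | ⟨a, b, rfl, rfl, h⟩)
    exacts [.inr ⟨a, b, rfl, rfl, h⟩, .inl ⟨a, b, rfl, rfl, h⟩]⟩
  loopless := ⟨fun p => by rintro (⟨a, b, rfl, h, -⟩ | ⟨a, b, rfl, h, -⟩) <;> cases h⟩

lemma card_edgeSet_incidenceGraph_le [Finite α] [Finite β] (r : α → β → Prop) :
    Nat.card (incidenceGraph r).edgeSet ≤ Nat.card {x : α × β // r x.1 x.2} := by
  refine Nat.card_le_card_of_surjective
    (fun x => ⟨s(.inl x.1.1, .inr x.1.2), Or.inl ⟨_, _, rfl, rfl, x.2⟩⟩) ?_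
  rintro ⟨e, he⟩
  induction e using Sym2.ind with
  | _ p q =>
    rcases (mem_edgeSet _).1 he with ⟨a, b, rfl, rfl, h⟩ | ⟨a, b, rfl, rfl, h⟩
    · exact ⟨⟨(a, b), h⟩, rfl⟩
    · exact ⟨⟨(a, b), h⟩, Subtype.ext Sym2.eq_swap⟩

lemma Connected.card_add_card_le_card_incidences_add_one [Finite α] [Finite β]
    {r : α → β → Prop} (h : (incidenceGraph r).Connected) :
    Nat.card α + Nat.card β ≤ Nat.card {x : α × β // r x.1 x.2} + 1 := by
  rw [← Nat.card_sum]
  exact h.card_vert_le_card_edgeSet_add_one.trans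
    (Nat.add_le_add_right (card_edgeSet_incidenceGraph_le r) 1)

end SimpleGraph

lemma Nat.card_subtype_mem_le_sum_count {α β γ : Type*} [Fintype α] [Fintype β]
    [DecidableEq γ] (f : α → γ) (s : β → Multiset γ) :
    Nat.card {x : α × β // f x.1 ∈ s x.2} ≤ ∑ a, ∑ b, (s b).count (f a) := by
  classical
  rw [Nat.card_eq_fintype_card, Fintype.card_subtype, card_filter, Fintype.sum_prod_type]
  gcongr with a _ b _
  split_ifs with h
  exacts [Multiset.one_le_count_iff_mem.2 h, Nat.zero_le _]

lemma Finset.sum_le_sum_tsub_add_card_mul {ι : Type*} (s : Finset ι) (f : ι → ℕ) (k : ℕ) :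
    ∑ i ∈ s, f i ≤ ∑ i ∈ s, (f i - k) + #s * k := by
  rw [← smul_eq_mul, ← sum_const, ← sum_add_distrib]
  exact sum_le_sum fun i _ => le_tsub_add

theorem complement_of_basepoint_disconnected_of_small_degree_general
    (V Et : Type*) [Fintype V] [DecidableEq V] [Fintype Et]
    (ends : Et → Multiset V)
    (base : V)
    (n : ℕ)
    (hn : Fintype.card Et + 1 = Fintype.card V + n)
    (deg : ℕ)
    (hdeg : deg = ∑ v ∈ Finset.univ.filter (fun v : V => v ≠ base),
      ((∑ e : Et, (ends e).count v) - 2))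
    (hsmall : deg + 1 < n)
    -- pieces of the complement Γ \ {base} and the "touching" relation
    (touch : ({v : V // v ≠ base} ⊕ Et) → ({v : V // v ≠ base} ⊕ Et) → Prop)
    (htouch : ∀ p q, touch p q ↔
      ((∃ (v : {v : V // v ≠ base}) (e : Et), p = Sum.inl v ∧ q = Sum.inr e ∧
          (v : V) ∈ ends e) ∨
       (∃ (v : {v : V // v ≠ base}) (e : Et), p = Sum.inr e ∧ q = Sum.inl v ∧
          (v : V) ∈ ends e))) :
    IsEmpty ({v : V // v ≠ base} ⊕ Et) ∨
      ∃ p q : ({v : V // v ≠ base} ⊕ Et), ¬ Relation.ReflTransGen touch p q := by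
  by_contra! ⟨hne, hall⟩
  have hconn : (SimpleGraph.incidenceGraph
      fun (v : {v : V // v ≠ base}) e => (v : V) ∈ ends e).Connected :=
    { preconnected := fun p q => (SimpleGraph.reachable_iff_reflTransGen p q).2
        (.mono (fun p q h => (htouch p q).1 h) _ _ (hall p q))
      nonempty := hne }
  have hpieces := hconn.card_add_card_le_card_incidences_add_one
  have hincidences :=
    Nat.card_subtype_mem_le_sum_count (Subtype.val : {v : V // v ≠ base} → V) ends
  have hvalence := sum_le_sum_tsub_add_card_mul (univ.filter (· ≠ base))
    (fun v => ∑ e, (ends e).count v) 2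
  have hbase : #(univ.filter (· ≠ base)) + 1 = Fintype.card V := by
    rw [filter_ne', card_erase_add_one (mem_univ base), card_univ]
  rw [← hdeg, sum_subtype _ (p := (· ≠ base)) fun v => by simp] at hvalence
  rw [Nat.card_eq_fintype_card (α := Et), Nat.card_eq_fintype_card (α := {v : V // v ≠ base}),
    Fintype.card_subtype] at hpieces
  omega

/-- Let `Γ` be a finite connected pointed multigraph of first Betti
number `n` (`#edges - #vertices + 1 = n`) with basepoint `base`, all
non-basepoint vertices of valence at least `3`, whose degree
`Σ_{v ≠ base} (valence v - 2)` satisfies `deg Γ < n - 1`.  Then the complement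
`Γ \ {base}` of the basepoint is disconnected or empty.  The complement is
modeled by its pieces: the non-basepoint vertices together with the open
interiors of all edges (a vertex piece touches an edge piece iff it is an
endpoint of that edge); `Γ \ {base}` is empty when there are no pieces, and
disconnected when two pieces cannot be joined by a chain of touching pieces. -/
theorem complement_of_basepoint_disconnected_of_small_degree
    (V Et : Type*) [Fintype V] [DecidableEq V] [Fintype Et]
    (ends : Et → Multiset V) (hends : ∀ e, Multiset.card (ends e) = 2)
    (base : V)
    (hconn : ∀ u v : V, Relation.ReflTransGen
      (fun a b => ∃ e, a ∈ ends e ∧ b ∈ ends e) u v)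
    (n : ℕ)
    (hn : Fintype.card Et + 1 = Fintype.card V + n)
    (hval : ∀ v : V, v ≠ base → 3 ≤ (∑ e : Et, (ends e).count v))
    (deg : ℕ)
    (hdeg : deg = ∑ v ∈ Finset.univ.filter (fun v : V => v ≠ base),
      ((∑ e : Et, (ends e).count v) - 2))
    (hsmall : deg + 1 < n)
    -- pieces of the complement Γ \ {base} and the "touching" relation
    (touch : ({v : V // v ≠ base} ⊕ Et) → ({v : V // v ≠ base} ⊕ Et) → Prop)
    (htouch : ∀ p q, touch p q ↔
      ((∃ (v : {v : V // v ≠ base}) (e : Et), p = Sum.inl v ∧ q = Sum.inr e ∧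
          (v : V) ∈ ends e) ∨
       (∃ (v : {v : V // v ≠ base}) (e : Et), p = Sum.inr e ∧ q = Sum.inl v ∧
          (v : V) ∈ ends e))) :
    IsEmpty ({v : V // v ≠ base} ⊕ Et) ∨
      ∃ p q : ({v : V // v ≠ base} ⊕ Et), ¬ Relation.ReflTransGen touch p q :=
  complement_of_basepoint_disconnected_of_small_degree_general V Et ends base n hn deg hdeg hsmall
    touch htouch
end

section
/- Let p ≥ 7 be a prime and let Γ be a finite pointed graph of degree at most 3 (degree = Σ_{v ≠ *}(valence(v) - 2)). Then any automorphism of Γ of order p fixing the basepoint fixes every edge not incident (at both relevant ends) to loops at the basepoint; more precisely, every order-p symmetry of Γ permutes loop edges attached at the basepoint and fixes the rest of the graph. -/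
/-- Let `p ≥ 7` be a prime and let `Γ` be a finite pointed
multigraph of degree at most `3`, where the degree is
`Σ_{v ≠ base}(valence v - 2)` (as in the paper, every non-basepoint vertex has
valence at least 3, so each term is nonnegative).  Then any automorphism of
`Γ` of order `p` fixing the basepoint fixes every vertex and every edge that
is not a loop at the basepoint: every order-`p` symmetry of `Γ` merely
permutes loop edges attached at the basepoint and fixes the rest of the
graph. -/
theorem order_p_symmetry_fixes_nonloops
    (V Et : Type*) [Fintype V] [DecidableEq V] [Fintype Et]
    (ends : Et → Multiset V) (hends : ∀ e, Multiset.card (ends e) = 2)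
    (base : V)
    (hval : ∀ v : V, v ≠ base → 3 ≤ (∑ e : Et, (ends e).count v))
    (hdeg : (∑ v ∈ Finset.univ.filter (fun v : V => v ≠ base),
      ((∑ e : Et, (ends e).count v) - 2)) ≤ 3)
    (p : ℕ) (hp : p.Prime) (hp7 : 7 ≤ p)
    (σV : Equiv.Perm V) (σE : Equiv.Perm Et)
    (hcompat : ∀ e : Et, ends (σE e) = Multiset.map σV (ends e))
    (hbase : σV base = base)
    (horder : orderOf ((σV, σE) : Equiv.Perm V × Equiv.Perm Et) = p) :
    (∀ v : V, σV v = v) ∧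
    (∀ e : Et, (ends e).count base ≠ 2 → σE e = e) := by
  classical
  have hpow : ((σV, σE) : Equiv.Perm V × Equiv.Perm Et) ^ p = 1 := by
    rw [← horder]; exact pow_orderOf_eq_one _
  have hVp : σV ^ p = 1 := congrArg Prod.fst hpow
  have hEp : σE ^ p = 1 := congrArg Prod.snd hpow
  -- at most 3 non-base vertices
  have hcardS : (Finset.univ.filter (fun v : V => v ≠ base)).card ≤ 3 := by
    have h1 : (Finset.univ.filter (fun v : V => v ≠ base)).card • 1 ≤
        ∑ v ∈ Finset.univ.filter (fun v : V => v ≠ base),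
          ((∑ e : Et, (ends e).count v) - 2) := by
      apply Finset.card_nsmul_le_sum
      intro v hv
      have hv' : v ≠ base := (Finset.mem_filter.mp hv).2
      have := hval v hv'
      omega
    simpa using h1.trans hdeg
  have hcardV : Fintype.card V ≤ 4 := by
    have huniv : (Finset.univ : Finset V) =
        insert base (Finset.univ.filter (fun v : V => v ≠ base)) := by
      ext v
      by_cases h : v = base <;> simp [h]
    rw [Fintype.card, huniv]
    exact (Finset.card_insert_le _ _).trans (by omega)
  -- σV is the identity
  have hσV : ∀ v : V, σV v = v := by
    have hdvd : orderOf σV ∣ p := orderOf_dvd_of_pow_eq_one hVp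
    rcases hp.eq_one_or_self_of_dvd _ hdvd with h1 | h1
    · have h2 : σV = 1 := orderOf_eq_one_iff.mp h1
      intro v; rw [h2]; rfl
    · exfalso
      have h2 : orderOf σV ∣ Fintype.card (Equiv.Perm V) := orderOf_dvd_card
      rw [h1, Fintype.card_perm] at h2
      have := (Nat.Prime.dvd_factorial hp).mp h2
      omega
  refine ⟨hσV, ?_⟩
  have hfix : ∀ e : Et, ends (σE e) = ends e := by
    intro e
    have hid : ⇑σV = id := funext hσV
    rw [hcompat, hid, Multiset.map_id]
  have hiter : ∀ (k : ℕ) (e : Et), ends ((⇑σE)^[k] e) = ends e := by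
    intro k
    induction k with
    | zero => intro e; rfl
    | succ n ih =>
      intro e
      rw [Function.iterate_succ_apply, ih, hfix]
  intro e he
  by_contra hne
  -- minimal period of e is p
  have hper : Function.IsPeriodicPt (⇑σE) p e := by
    show (⇑σE)^[p] e = e
    rw [Equiv.Perm.iterate_eq_pow, hEp]; rfl
  have hdvd : Function.minimalPeriod (⇑σE) e ∣ p :=
    Function.IsPeriodicPt.minimalPeriod_dvd hper
  have hmp : Function.minimalPeriod (⇑σE) e = p := by
    rcases hp.eq_one_or_self_of_dvd _ hdvd with h1 | h1
    · exact absurd (Function.minimalPeriod_eq_one_iff_isFixedPt.mp h1) hne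
    · exact h1
  -- a non-base endpoint of e
  obtain ⟨w, hw, hwb⟩ : ∃ w ∈ ends e, w ≠ base := by
    by_contra h
    push_neg at h
    have : ends e = Multiset.replicate 2 base := by
      rw [Multiset.eq_replicate]
      exact ⟨hends e, h⟩
    rw [this] at he
    simp [Multiset.count_replicate] at he
  -- the orbit of e has p edges, all containing w, so w has valence ≥ p
  have hinj : Set.InjOn (fun k => (⇑σE)^[k] e) ↑(Finset.range p) := by
    intro a ha b hb hab
    refine Function.iterate_injOn_Iio_minimalPeriod (f := ⇑σE) (x := e) ?_ ?_ hab
    · rw [hmp]; simpa using ha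
    · rw [hmp]; simpa using hb
  have hcardimg : ((Finset.range p).image (fun k => (⇑σE)^[k] e)).card = p := by
    rw [Finset.card_image_of_injOn hinj, Finset.card_range]
  have hsum : p ≤ ∑ e' : Et, (ends e').count w := by
    have h1 : ((Finset.range p).image (fun k => (⇑σE)^[k] e)).card • 1 ≤
        ∑ e' ∈ (Finset.range p).image (fun k => (⇑σE)^[k] e), (ends e').count w := by
      apply Finset.card_nsmul_le_sum
      intro e' he'
      obtain ⟨k, _, rfl⟩ := Finset.mem_image.mp he'
      rw [hiter]
      exact Multiset.one_le_count_iff_mem.mpr hw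
    have h2 : ∑ e' ∈ (Finset.range p).image (fun k => (⇑σE)^[k] e), (ends e').count w ≤
        ∑ e' : Et, (ends e').count w :=
      Finset.sum_le_sum_of_subset (Finset.subset_univ _)
    calc p = ((Finset.range p).image (fun k => (⇑σE)^[k] e)).card • 1 := by
            rw [hcardimg]; simp
      _ ≤ _ := h1.trans h2
  have hwmem : w ∈ Finset.univ.filter (fun v : V => v ≠ base) := by
    simp [hwb]
  have hterm : ((∑ e' : Et, (ends e').count w) - 2) ≤ 3 :=
    le_trans (Finset.single_le_sum (f := fun v : V => (∑ e' : Et, (ends e').count v) - 2) (fun _ _ => Nat.zero_le _) hwmem) hdeg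
  omega
end
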